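/- arXiv:2004.10865 — 5 statements merged into one kernel-verified Lean document; each statement's English description precedes it below -/
import Mathlib

section
/- Let r ∈ [1 - 1/√3, 1/2] and ℓ := 2 arctan(√(4(1-r)² - 1)). Then for all x, y ∈ [0, ℓ] with x ≤ y, one has arcsin(sin(x/2)/(1-r)) + arcsin(sin(y/2)/(1-r)) - (x+y)/2 ≤ y. -/
open Real

lemma arcsin_key (r ℓ : ℝ) (hr : r ∈ Set.Icc (1 - 1 / Real.sqrt 3) (1 / 2))
    (hℓ : ℓ = 2 * Real.arctan (Real.sqrt (4 * (1 - r) ^ 2 - 1)))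
    {t : ℝ} (ht : t ∈ Set.Icc 0 ℓ) :
    Real.arcsin (Real.sin (t / 2) / (1 - r)) ≤ t := by
  obtain ⟨hr1, hr2⟩ := hr
  obtain ⟨ht0, htℓ⟩ := ht
  have h3 : (0:ℝ) < Real.sqrt 3 := Real.sqrt_pos.2 (by norm_num)
  have hhalf : (1:ℝ)/2 ≤ 1 - r := by linarith
  have hpos : (0:ℝ) < 1 - r := by linarith
  have hup : 1 - r ≤ 1 / Real.sqrt 3 := by linarith
  set u := Real.sqrt (4 * (1 - r) ^ 2 - 1) with hu
  have hsq0 : (0:ℝ) ≤ 4 * (1 - r) ^ 2 - 1 := by nlinarith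
  have hu0 : 0 ≤ u := Real.sqrt_nonneg _
  have hu1 : u ≤ 1 := by
    have h13 : (1 / Real.sqrt 3 : ℝ) ^ 2 = 1 / 3 := by
      rw [div_pow, one_pow, Real.sq_sqrt (by norm_num : (3:ℝ) ≥ 0)]
    have hle : 4 * (1 - r) ^ 2 - 1 ≤ 1 := by nlinarith
    calc u ≤ Real.sqrt 1 := Real.sqrt_le_sqrt hle
      _ = 1 := Real.sqrt_one
  -- ℓ ≤ π/2
  have hℓle : ℓ ≤ π / 2 := by
    rw [hℓ]
    have : Real.arctan u ≤ Real.arctan 1 := Real.arctan_strictMono.monotone hu1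
    rw [Real.arctan_one] at this
    linarith
  have htpi : t ≤ π / 2 := le_trans htℓ hℓle
  -- cos (ℓ/2) = 1/(2*(1-r))
  have hcosℓ : Real.cos (ℓ / 2) = 1 / (2 * (1 - r)) := by
    rw [hℓ]
    have : (2 : ℝ) * Real.arctan u / 2 = Real.arctan u := by ring
    rw [this, Real.cos_arctan]
    congr 1
    rw [show (1:ℝ) + u ^ 2 = 4 * (1 - r)^2 by
      rw [hu, Real.sq_sqrt hsq0]; ring]
    rw [show (4:ℝ) * (1 - r)^2 = (2 * (1 - r))^2 by ring,
      Real.sqrt_sq (by linarith)]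
  -- cos (t/2) ≥ cos (ℓ/2)
  have hcos : Real.cos (ℓ / 2) ≤ Real.cos (t / 2) := by
    apply Real.cos_le_cos_of_nonneg_of_le_pi (by linarith)
    · have := Real.pi_pos; linarith
    · linarith
  have hsin0 : 0 ≤ Real.sin (t / 2) := by
    apply Real.sin_nonneg_of_nonneg_of_le_pi (by linarith)
    have := Real.pi_pos; linarith
  -- sin(t/2)/(1-r) ≤ sin t
  have hkey : Real.sin (t / 2) / (1 - r) ≤ Real.sin t := by
    have hst : Real.sin t = 2 * Real.sin (t/2) * Real.cos (t/2) := by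
      rw [show t = 2 * (t/2) by ring, Real.sin_two_mul]
      ring_nf
    rw [hst, div_le_iff₀ hpos]
    have h1 : 1 / (2 * (1 - r)) ≤ Real.cos (t/2) := hcosℓ ▸ hcos
    have h2 : Real.sin (t/2) * (1 / (2 * (1-r))) ≤ Real.sin (t/2) * Real.cos (t/2) :=
      mul_le_mul_of_nonneg_left h1 hsin0
    have : Real.sin (t/2) * (1 / (2 * (1-r))) * (2 * (1 - r)) = Real.sin (t/2) := by
      field_simp
    nlinarith
  have hneg1 : -1 ≤ Real.sin (t / 2) / (1 - r) := by
    have : 0 ≤ Real.sin (t / 2) / (1 - r) := div_nonneg hsin0 hpos.le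
    linarith
  calc Real.arcsin (Real.sin (t / 2) / (1 - r)) ≤ Real.arcsin (Real.sin t) :=
        Real.monotone_arcsin hkey
    _ = t := Real.arcsin_sin (by linarith [Real.pi_pos]) htpi

theorem arcsin_sum_ineq
    (r ℓ : ℝ) (hr : r ∈ Set.Icc (1 - 1 / Real.sqrt 3) (1 / 2))
    (hℓ : ℓ = 2 * Real.arctan (Real.sqrt (4 * (1 - r) ^ 2 - 1))) :
    ∀ x ∈ Set.Icc 0 ℓ, ∀ y ∈ Set.Icc 0 ℓ, x ≤ y →
      Real.arcsin (Real.sin (x / 2) / (1 - r)) +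
        Real.arcsin (Real.sin (y / 2) / (1 - r)) - (x + y) / 2 ≤ y := by
  intro x hx y hy hxy
  have h1 := arcsin_key r ℓ hr hℓ hx
  have h2 := arcsin_key r ℓ hr hℓ hy
  linarith
end

section
/- Let r ∈ [1 - 1/√3, 1/2], ℓ := 2 arctan(√(4(1-r)² - 1)), and for h ∈ [0, ℓ] define a(h) := 2 arcsin((1-r) sin h) and b(h) := h + (ℓ - a(h))/2. Then b(h) ≥ a(h) for all h ∈ [0, ℓ], with equality only at h = ℓ. -/
/-!
Write `c = 1 - r` and `t = √(4c² - 1)`, so that `ℓ = 2 arctan t` with `cos (ℓ / 2) = 1 / (2c)`.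
Then `c sin ℓ = sin (ℓ / 2)`, hence `a ℓ = ℓ`. Since `b - a = (3/2) ((2h + ℓ)/3 - a)`, it suffices
that `a h - 2h/3` is strictly increasing on `[0, ℓ]`, i.e. `a' > 2/3` there. Squaring, this is
`8 c² sin² h < 9 c² - 1`, and as `sin h < sin ℓ = t / (2c²)` it follows from
`(3c² - 1)(3c² - 2) ≥ 0`, which is where `c ≤ 1/√3` enters.
-/

open Real Set

theorem sin_two_mul_arctan (x : ℝ) : sin (2 * arctan x) = 2 * x / (1 + x ^ 2) := by
  have hpos : 0 < √(1 + x ^ 2) := sqrt_pos.2 (by positivity)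
  rw [sin_two_mul, sin_arctan, cos_arctan]
  field_simp
  rw [sq_sqrt (by positivity)]

section

variable {c t : ℝ}

theorem two_mul_arcsin_mul_sin_two_mul_arctan (hc : 0 < c) (ht : 1 + t ^ 2 = 4 * c ^ 2) :
    2 * arcsin (c * sin (2 * arctan t)) = 2 * arctan t := by
  have hsqrt : √(1 + t ^ 2) = 2 * c := by
    rw [ht, show 4 * c ^ 2 = (2 * c) ^ 2 by ring, sqrt_sq (by linarith)]
  have hsin : c * sin (2 * arctan t) = sin (arctan t) := by
    rw [sin_two_mul_arctan, sin_arctan, hsqrt, ht]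
    field_simp
    ring
  rw [hsin, arcsin_sin (neg_pi_div_two_lt_arctan t).le (arctan_lt_pi_div_two t).le]

theorem hasDerivAt_two_mul_arcsin_mul_sin (hc : c ^ 2 < 1) (x : ℝ) :
    HasDerivAt (fun y => 2 * arcsin (c * sin y)) (2 * c * cos x / √(1 - (c * sin x) ^ 2)) x := by
  have hsq : (c * sin x) ^ 2 < 1 := by
    rw [mul_pow]; nlinarith [sin_sq_le_one x, sq_nonneg (sin x), sq_nonneg c]
  have hne_neg : c * sin x ≠ -1 := by rintro h; rw [h] at hsq; norm_num at hsq
  have hne_pos : c * sin x ≠ 1 := by rintro h; rw [h] at hsq; norm_num at hsq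
  refine (((hasDerivAt_arcsin hne_neg hne_pos).comp x
    ((hasDerivAt_sin x).const_mul c)).const_mul 2).congr_deriv ?_
  ring

theorem two_thirds_lt_two_mul_mul_cos_div (hc : 0 < c) (hc3 : 3 * c ^ 2 ≤ 1)
    (ht : 1 + t ^ 2 = 4 * c ^ 2) {x : ℝ} (hx0 : 0 < x) (hx : x < 2 * arctan t) :
    2 / 3 < 2 * c * cos x / √(1 - (c * sin x) ^ 2) := by
  have hℓ : 2 * arctan t ≤ π / 2 := by
    have : arctan t ≤ π / 4 := arctan_one ▸ arctan_mono (by nlinarith)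
    linarith
  have hcos : 0 < cos x := cos_pos_of_mem_Ioo ⟨by linarith [pi_pos], by linarith⟩
  have hsin : sin x < t / (2 * c ^ 2) := by
    have := strictMonoOn_sin ⟨by linarith [pi_pos], by linarith⟩ ⟨by linarith [pi_pos], hℓ⟩ hx
    rwa [sin_two_mul_arctan, ht, show 2 * t / (4 * c ^ 2) = t / (2 * c ^ 2) by field_simp; ring]
      at this
  have hsin0 : 0 < sin x := sin_pos_of_pos_of_lt_pi hx0 (by linarith)
  have hsin_sq : 4 * c ^ 4 * sin x ^ 2 < t ^ 2 := by
    rw [lt_div_iff₀ (by positivity)] at hsin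
    have := pow_lt_pow_left₀ hsin (by positivity) two_ne_zero
    linarith [show (sin x * (2 * c ^ 2)) ^ 2 = 4 * c ^ 4 * sin x ^ 2 by ring]
  have hkey : 8 * c ^ 2 * sin x ^ 2 < 9 * c ^ 2 - 1 := by
    have : 0 ≤ (1 - 3 * c ^ 2) * (2 - 3 * c ^ 2) := mul_nonneg (by linarith) (by linarith)
    have hc2 : 0 < c ^ 2 := by positivity
    nlinarith
  have hsqrt : √(1 - (c * sin x) ^ 2) < 3 * c * cos x := by
    rw [sqrt_lt' (by positivity)]
    nlinarith [sin_sq_add_cos_sq x]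
  have hpos : 0 < √(1 - (c * sin x) ^ 2) := sqrt_pos.2 (by nlinarith [sin_sq_add_cos_sq x])
  rw [lt_div_iff₀ hpos]
  linarith

theorem strictMonoOn_two_mul_arcsin_mul_sin_sub (hc : 0 < c) (hc3 : 3 * c ^ 2 ≤ 1)
    (ht : 1 + t ^ 2 = 4 * c ^ 2) :
    StrictMonoOn (fun x => 2 * arcsin (c * sin x) - 2 / 3 * x) (Icc 0 (2 * arctan t)) := by
  have hderiv (x : ℝ) := (hasDerivAt_two_mul_arcsin_mul_sin (c := c) (by linarith) x).sub
    ((hasDerivAt_id x).const_mul (2 / 3))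
  refine strictMonoOn_of_hasDerivWithinAt_pos (convex_Icc _ _)
    (fun x _ => (hderiv x).continuousAt.continuousWithinAt)
    (fun x _ => (hderiv x).hasDerivWithinAt) fun x hx => ?_
  rw [interior_Icc] at hx
  simpa using two_thirds_lt_two_mul_mul_cos_div hc hc3 ht hx.1 hx.2

theorem two_mul_arcsin_mul_sin_lt (hc : 0 < c) (hc3 : 3 * c ^ 2 ≤ 1)
    (ht : 1 + t ^ 2 = 4 * c ^ 2) {x : ℝ} (hx0 : 0 ≤ x) (hx : x < 2 * arctan t) :
    2 * arcsin (c * sin x) < (2 * x + 2 * arctan t) / 3 := by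
  have hℓ : 0 ≤ 2 * arctan t := by linarith
  have := strictMonoOn_two_mul_arcsin_mul_sin_sub hc hc3 ht ⟨hx0, hx.le⟩ ⟨hℓ, le_rfl⟩ hx
  simp only [two_mul_arcsin_mul_sin_two_mul_arctan hc ht] at this
  linarith

end

theorem b_ge_a
    (r ℓ : ℝ) (hr : r ∈ Set.Icc (1 - 1 / Real.sqrt 3) (1 / 2))
    (hℓ : ℓ = 2 * Real.arctan (Real.sqrt (4 * (1 - r) ^ 2 - 1)))
    (a b : ℝ → ℝ)
    (ha : ∀ h, a h = 2 * Real.arcsin ((1 - r) * Real.sin h))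
    (hb : ∀ h, b h = h + (ℓ - a h) / 2) :
    ∀ h ∈ Set.Icc 0 ℓ, a h ≤ b h ∧ (b h = a h → h = ℓ) := by
  obtain ⟨hr_lower, hr_upper⟩ := hr
  set c := 1 - r
  set t := √(4 * c ^ 2 - 1)
  have hc : 1 / 2 ≤ c := by linarith
  have hc3 : 3 * c ^ 2 ≤ 1 := by
    have : c * √3 ≤ 1 := by rw [← le_div_iff₀ (by positivity)]; linarith
    nlinarith [mul_self_le_mul_self (by positivity) this, sq_sqrt (show (0 : ℝ) ≤ 3 by norm_num)]
  have ht : 1 + t ^ 2 = 4 * c ^ 2 := by rw [sq_sqrt (by nlinarith)]; ring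
  rintro h ⟨h0, hhℓ⟩
  rw [hb, ha, hℓ]
  rcases hhℓ.eq_or_lt with rfl | hlt
  · rw [hℓ, two_mul_arcsin_mul_sin_two_mul_arctan (by linarith) ht]
    exact ⟨by linarith, fun _ => rfl⟩
  · have := two_mul_arcsin_mul_sin_lt (by linarith) hc3 ht h0 (hℓ ▸ hlt)
    exact ⟨by linarith, fun _ => by linarith⟩
end

section
/- Let r ∈ [1 - 1/√3, 1/2] and ℓ := 2 arctan(√(4(1-r)² - 1)). The function G(h) := 3·arcsin((1-r) sin h) - h - ℓ/2 is strictly increasing on (0, ℓ) and satisfies G(ℓ) = 0; consequently G(h) < 0 for h ∈ [0, ℓ). -/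
set_option maxHeartbeats 1000000 in
theorem G_strict_mono_and_neg
    (r ℓ : ℝ) (hr : r ∈ Set.Icc (1 - 1 / Real.sqrt 3) (1 / 2))
    (hℓ : ℓ = 2 * Real.arctan (Real.sqrt (4 * (1 - r) ^ 2 - 1)))
    (G : ℝ → ℝ)
    (hG : ∀ h, G h = 3 * Real.arcsin ((1 - r) * Real.sin h) - h - ℓ / 2) :
    StrictMonoOn G (Set.Ioo 0 ℓ) ∧ G ℓ = 0 ∧ ∀ h ∈ Set.Ico 0 ℓ, G h < 0 := by
  obtain ⟨hr1, hr2⟩ := hr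
  obtain rfl : G = fun h => 3 * Real.arcsin ((1 - r) * Real.sin h) - h - ℓ / 2 :=
    funext hG
  set s : ℝ := 1 - r with hs_def
  have hsqrt3 : (Real.sqrt 3) ^ 2 = 3 := Real.sq_sqrt (by norm_num)
  have hsqrt3pos : 0 < Real.sqrt 3 := Real.sqrt_pos.2 (by norm_num)
  have hs1 : 1 / 2 ≤ s := by simp only [hs_def]; linarith only [hr2]
  have hs2 : s ≤ 1 / Real.sqrt 3 := by simp only [hs_def]; linarith only [hr1]
  clear_value s
  have hs2' : s ^ 2 ≤ 1 / 3 := by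
    have : s ^ 2 ≤ (1 / Real.sqrt 3) ^ 2 := by
      apply pow_le_pow_left₀ (by linarith only [hs1]) hs2
    calc s ^ 2 ≤ (1 / Real.sqrt 3) ^ 2 := this
      _ = 1 / 3 := by rw [div_pow, hsqrt3]; norm_num
  have hspos : 0 < s := by linarith only [hs1]
  have h13 : 1 / Real.sqrt 3 < 1 := by
    rw [div_lt_one hsqrt3pos]; nlinarith only [hsqrt3, hsqrt3pos]
  have hslt1 : s < 1 := by linarith only [hs2, h13]
  -- t := sqrt (4 s^2 - 1)
  set t : ℝ := Real.sqrt (4 * s ^ 2 - 1) with ht_def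
  have ht_nonneg : 0 ≤ t := Real.sqrt_nonneg _
  have ht_sq : t ^ 2 = 4 * s ^ 2 - 1 := Real.sq_sqrt (by nlinarith only [hs1])
  clear_value t
  have hℓ' : ℓ = 2 * Real.arctan t := hℓ
  have h1t : Real.sqrt (1 + t ^ 2) = 2 * s := by
    rw [ht_sq, show 1 + (4 * s ^ 2 - 1) = (2 * s) ^ 2 by ring]
    exact Real.sqrt_sq (by linarith only [hspos])
  have hcos_half : Real.cos (Real.arctan t) = 1 / (2 * s) := by
    rw [Real.cos_arctan, h1t]
  have hsin_half : Real.sin (Real.arctan t) = t / (2 * s) := by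
    rw [Real.sin_arctan, h1t]
  have harctan_nonneg : 0 ≤ Real.arctan t := by simpa using Real.arctan_strictMono.monotone ht_nonneg
  have harctan_lt : Real.arctan t < Real.pi / 2 := Real.arctan_lt_pi_div_two t
  have hℓ_nonneg : 0 ≤ ℓ := by rw [hℓ']; linarith only [harctan_nonneg]
  have hℓ_lt_pi : ℓ < Real.pi := by rw [hℓ']; linarith only [harctan_lt]
  -- cos ℓ
  have hcosℓ : Real.cos ℓ = (1 - 2 * s ^ 2) / (2 * s ^ 2) := by
    rw [hℓ', Real.cos_two_mul, hcos_half]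
    field_simp
  have hcosℓ_pos : 0 < Real.cos ℓ := by
    rw [hcosℓ]
    apply div_pos (by linarith only [hs2']) (by positivity)
  -- G ℓ = 0
  have hGℓ : (fun h => 3 * Real.arcsin (s * Real.sin h) - h - ℓ / 2) ℓ = 0 := by
    have hsinℓ : s * Real.sin ℓ = Real.sin (Real.arctan t) := by
      rw [hℓ', Real.sin_two_mul, hsin_half, hcos_half]
      field_simp
    simp only
    rw [hsinℓ, Real.arcsin_sin (by linarith only [harctan_nonneg, Real.pi_pos]) (by linarith only [harctan_lt]), hℓ']
    ring
  -- derivative positivity on interior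
  have key : StrictMonoOn (fun h => 3 * Real.arcsin (s * Real.sin h) - h - ℓ / 2)
      (Set.Icc 0 ℓ) := by
    apply strictMonoOn_of_deriv_pos (convex_Icc 0 ℓ)
    · apply Continuous.continuousOn
      exact ((continuous_const.mul (Real.continuous_arcsin.comp
        (continuous_const.mul Real.continuous_sin))).sub continuous_id).sub continuous_const
    · intro x hx
      rw [interior_Icc] at hx
      obtain ⟨hx0, hxℓ⟩ := hx
      have habs : |s * Real.sin x| < 1 := by
        rw [abs_mul, abs_of_pos hspos]
        calc s * |Real.sin x| ≤ s * 1 := by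
              apply mul_le_mul_of_nonneg_left (Real.abs_sin_le_one x) (le_of_lt hspos)
          _ < 1 := by linarith only [hslt1]
      have habs' : (s * Real.sin x) ^ 2 < 1 := by
        rwa [sq_lt_one_iff_abs_lt_one]
      have hne1 : s * Real.sin x ≠ -1 := by
        intro h; rw [h] at habs; simp at habs
      have hne2 : s * Real.sin x ≠ 1 := by
        intro h; rw [h] at habs; simp at habs
      have hE_pos : 0 < 1 - (s * Real.sin x) ^ 2 := by linarith only [habs']
      have hsqrtE_pos : 0 < Real.sqrt (1 - (s * Real.sin x) ^ 2) := Real.sqrt_pos.2 hE_pos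
      have hd1 : HasDerivAt (fun h => s * Real.sin h) (s * Real.cos x) x :=
        (Real.hasDerivAt_sin x).const_mul s
      have hd2 : HasDerivAt Real.arcsin
          (1 / Real.sqrt (1 - (s * Real.sin x) ^ 2)) (s * Real.sin x) :=
        Real.hasDerivAt_arcsin hne1 hne2
      have hd3 : HasDerivAt (fun h => Real.arcsin (s * Real.sin h))
          (1 / Real.sqrt (1 - (s * Real.sin x) ^ 2) * (s * Real.cos x)) x :=
        by have := hd2.comp x hd1; exact this
      have hd4 : HasDerivAt (fun h => 3 * Real.arcsin (s * Real.sin h) - h - ℓ / 2)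
          (3 * (1 / Real.sqrt (1 - (s * Real.sin x) ^ 2) * (s * Real.cos x)) - 1) x := by
        simpa using (((hd3.const_mul 3).sub (hasDerivAt_id x)).sub_const (ℓ / 2))
      rw [hd4.deriv]
      -- show positivity
      have hcosx : Real.cos ℓ < Real.cos x :=
        Real.cos_lt_cos_of_nonneg_of_le_pi (le_of_lt hx0) (le_of_lt hℓ_lt_pi) hxℓ
      have hcosx_pos : 0 < Real.cos x := lt_trans hcosℓ_pos hcosx
      have hkey : 1 - (s * Real.sin x) ^ 2 < (3 * (s * Real.cos x)) ^ 2 := by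
        have hprod : (0:ℝ) ≤ (1 - 3 * s ^ 2) * (2 - 3 * s ^ 2) :=
          mul_nonneg (by linarith only [hs2']) (by linarith only [hs2'])
        have hq : (1 - s ^ 2) * s ^ 2 ≤ 2 * (1 - 2 * s ^ 2) ^ 2 := by nlinarith only [hprod]
        have hA2 : Real.cos ℓ ^ 2 * (4 * s ^ 4) = (1 - 2 * s ^ 2) ^ 2 := by
          have h4 : ((2:ℝ) * s ^ 2) ^ 2 = 4 * s ^ 4 := by ring
          rw [hcosℓ, div_pow, h4,
            div_mul_cancel₀ _ (by positivity : (4 * s ^ 4 : ℝ) ≠ 0)]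
        have h8 : (1 - s ^ 2) * s ^ 2 ≤ (8 * s ^ 2 * Real.cos ℓ ^ 2) * s ^ 2 := by
          nlinarith only [hq, hA2]
        have h8' : 1 - s ^ 2 ≤ 8 * s ^ 2 * Real.cos ℓ ^ 2 :=
          le_of_mul_le_mul_right h8 (by positivity)
        have hc2 : Real.cos ℓ ^ 2 < Real.cos x ^ 2 := by
          nlinarith only [mul_pos (sub_pos.2 hcosx)
            (show (0:ℝ) < Real.cos x + Real.cos ℓ by linarith only [hcosx_pos, hcosℓ_pos])]
        have hc2' : 8 * s ^ 2 * Real.cos ℓ ^ 2 < 8 * s ^ 2 * Real.cos x ^ 2 := by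
          have := mul_lt_mul_of_pos_left hc2 (show (0:ℝ) < 8 * s ^ 2 by positivity)
          linarith only [this]
        have hsin2 : Real.sin x ^ 2 = 1 - Real.cos x ^ 2 := by
          linarith only [Real.sin_sq_add_cos_sq x]
        have hexp : (s * Real.sin x) ^ 2 = s ^ 2 - s ^ 2 * Real.cos x ^ 2 := by
          rw [mul_pow, hsin2]; ring
        rw [hexp]
        nlinarith only [h8', hc2']
      have hsqrt_lt : Real.sqrt (1 - (s * Real.sin x) ^ 2) < 3 * (s * Real.cos x) := by
        rw [show (3 * (s * Real.cos x)) = (3 * (s * Real.cos x)) by rfl]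
        have h3pos : 0 < 3 * (s * Real.cos x) := by positivity
        rw [← Real.sqrt_sq (le_of_lt h3pos)]
        exact Real.sqrt_lt_sqrt (le_of_lt hE_pos) hkey
      have : 1 < 3 * (1 / Real.sqrt (1 - (s * Real.sin x) ^ 2) * (s * Real.cos x)) := by
        rw [show 3 * (1 / Real.sqrt (1 - (s * Real.sin x) ^ 2) * (s * Real.cos x))
            = 3 * (s * Real.cos x) / Real.sqrt (1 - (s * Real.sin x) ^ 2) by ring]
        rw [lt_div_iff₀ hsqrtE_pos]
        linarith only [hsqrt_lt]
      linarith only [this]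
  refine ⟨key.mono Set.Ioo_subset_Icc_self, hGℓ, ?_⟩
  intro h hh
  obtain ⟨hh0, hhℓ⟩ := hh
  have := key ⟨hh0, le_of_lt hhℓ⟩ ⟨hℓ_nonneg, le_refl ℓ⟩ hhℓ
  rw [hGℓ] at this
  exact this
end

section
/- Define ψ(r) := arccos((12/5)r - 1/5) - 2(1-r)·arctan(√(4(1-r)² - 1)) for r ∈ [1 - 1/√3, 1/2]. Then ψ is concave on this interval and ψ(r) ≥ 0; equivalently, cos((1-r)·ℓ(r)) ≥ (12/5)r - 1/5 where ℓ(r) = 2 arctan(√(4(1-r)²-1)). -/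
/-!
Writing `u = (12r - 1)/5` and `q = 4(1 - r)² - 1 = (1 - 2r)(3 - 2r)`, one has
`ψ'' = -(144/25) u / (1 - u²)^{3/2} + 2 / ((1 - r) q^{3/2})`. Squaring and cancelling `(1 - 2r)³`
(note `1 - u² = (24/25)(1 - 2r)(1 + 3r)`) reduces `ψ'' ≤ 0` to
`8(1 + 3r)³ ≤ 3(12r - 1)²(1 - r)²(3 - 2r)³`, which holds on `[1/3, 1/2]` because
`1 + 3r ≤ (12r - 1)(1 - r)` there. So `ψ` is concave on `[1/3, 1/2]`, and a concave function is
bounded below by its values at the endpoints of `[1 - 1/√3, 1/2]`: `ψ(1/2) = 0`, while at the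
left endpoint `arctan √q = π/6` and `cos x ≥ 1 - x²/2` with `π < 3.15` give `ψ ≥ 0`.
Finally `ψ(r) ≥ 0` says `(1 - r) ℓ(r) ≤ arccos u`, and `cos` is antitone on `[0, π]`.
-/

open Real Set

lemma le_cos_of_le_arccos {x y : ℝ} (hx : 0 ≤ x) (hy : y ≤ 1) (h : x ≤ arccos y) :
    y ≤ cos x := by
  rcases le_or_gt (-1) y with hy' | hy'
  · simpa only [cos_arccos hy' hy] using cos_le_cos_of_nonneg_of_le_pi hx (arccos_le_pi y) h
  · exact hy'.le.trans (neg_one_le_cos x)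

lemma le_arccos_of_le_cos {x y : ℝ} (hx₀ : 0 ≤ x) (hxπ : x ≤ π) (h : y ≤ cos x) :
    x ≤ arccos y := by
  simpa only [arccos_cos hx₀ hxπ] using arccos_le_arccos h

lemma mul_mul_sqrt_le_mul_mul_sqrt {a b x y : ℝ} (hb : 0 ≤ b) (hx : 0 ≤ x) (hy : 0 ≤ y)
    (h : a ^ 2 * x ^ 3 ≤ b ^ 2 * y ^ 3) : a * (x * √x) ≤ b * (y * √y) := by
  have hsq : ∀ c z : ℝ, 0 ≤ z → (c * (z * √z)) ^ 2 = c ^ 2 * z ^ 3 := fun c z hz => by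
    rw [mul_pow, mul_pow, sq_sqrt hz]; ring
  refine (abs_le_of_sq_le_sq' ?_ (by positivity)).2
  rwa [hsq a x hx, hsq b y hy]

lemma eight_mul_one_add_three_mul_cube_le {r : ℝ} (hr : r ∈ Icc (1 / 3 : ℝ) (1 / 2)) :
    8 * (1 + 3 * r) ^ 3 ≤ 3 * (12 * r - 1) ^ 2 * (1 - r) ^ 2 * (3 - 2 * r) ^ 3 := by
  obtain ⟨h₁, h₂⟩ := hr
  have hw : 1 + 3 * r ≤ (12 * r - 1) * (1 - r) := by nlinarith
  have hw' : 8 * ((12 * r - 1) * (1 - r)) ≤ 3 * (3 - 2 * r) ^ 3 := by nlinarith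
  calc 8 * (1 + 3 * r) ^ 3 ≤ 8 * ((12 * r - 1) * (1 - r)) ^ 3 := by gcongr
    _ = ((12 * r - 1) * (1 - r)) ^ 2 * (8 * ((12 * r - 1) * (1 - r))) := by ring
    _ ≤ ((12 * r - 1) * (1 - r)) ^ 2 * (3 * (3 - 2 * r) ^ 3) := by gcongr
    _ = 3 * (12 * r - 1) ^ 2 * (1 - r) ^ 2 * (3 - 2 * r) ^ 3 := by ring

noncomputable def psi (r : ℝ) : ℝ :=
  arccos (12 / 5 * r - 1 / 5) - 2 * (1 - r) * arctan √(4 * (1 - r) ^ 2 - 1)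

noncomputable def psi' (r : ℝ) : ℝ :=
  -(12 / 5) / √(1 - (12 / 5 * r - 1 / 5) ^ 2) + 2 * arctan √(4 * (1 - r) ^ 2 - 1)
    + 2 / √(4 * (1 - r) ^ 2 - 1)

noncomputable def psi'' (r : ℝ) : ℝ :=
  -(144 / 25) * (12 / 5 * r - 1 / 5) /
      ((1 - (12 / 5 * r - 1 / 5) ^ 2) * √(1 - (12 / 5 * r - 1 / 5) ^ 2))
    + 2 / ((1 - r) * ((4 * (1 - r) ^ 2 - 1) * √(4 * (1 - r) ^ 2 - 1)))

lemma psi_domain_pos {r : ℝ} (hr : r ∈ Ioo (1 / 3 : ℝ) (1 / 2)) :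
    0 < 12 / 5 * r - 1 / 5 ∧ 0 < 1 - (12 / 5 * r - 1 / 5) ^ 2 ∧ 0 < 1 - r ∧
      0 < 4 * (1 - r) ^ 2 - 1 := by
  obtain ⟨h₁, h₂⟩ := hr
  exact ⟨by linarith, by nlinarith, by linarith, by nlinarith⟩

lemma hasDerivAt_sqrt_one_sub_sq {r : ℝ} (h : 0 < 1 - (12 / 5 * r - 1 / 5) ^ 2) :
    HasDerivAt (fun r => √(1 - (12 / 5 * r - 1 / 5) ^ 2))
      (-(12 / 5) * (12 / 5 * r - 1 / 5) / √(1 - (12 / 5 * r - 1 / 5) ^ 2)) r := by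
  have := ((((hasDerivAt_id' r).const_mul (12 / 5)).sub_const (1 / 5)).fun_pow 2).const_sub 1
  convert this.sqrt h.ne' using 1
  field_simp
  ring

lemma hasDerivAt_sqrt_four_mul_sq_sub_one {r : ℝ} (h : 0 < 4 * (1 - r) ^ 2 - 1) :
    HasDerivAt (fun r => √(4 * (1 - r) ^ 2 - 1)) (-4 * (1 - r) / √(4 * (1 - r) ^ 2 - 1)) r := by
  have := ((((hasDerivAt_id' r).const_sub 1).fun_pow 2).const_mul 4).sub_const 1
  convert this.sqrt h.ne' using 1
  field_simp
  ring

lemma hasDerivAt_arctan_sqrt {r : ℝ} (h : 0 < 4 * (1 - r) ^ 2 - 1) :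
    HasDerivAt (fun r => arctan √(4 * (1 - r) ^ 2 - 1))
      (-1 / ((1 - r) * √(4 * (1 - r) ^ 2 - 1))) r := by
  convert (hasDerivAt_sqrt_four_mul_sq_sub_one h).arctan using 1
  have h1r : 1 - r ≠ 0 := by rintro h'; simp [h'] at h; linarith
  rw [sq_sqrt h.le]
  field_simp
  ring

lemma hasDerivAt_psi {r : ℝ} (hr : r ∈ Ioo (1 / 3 : ℝ) (1 / 2)) :
    HasDerivAt psi (psi' r) r := by
  obtain ⟨hu, hp, h1r, hq⟩ := psi_domain_pos hr
  have harccos :=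
    (hasDerivAt_arccos (x := 12 / 5 * r - 1 / 5) (by nlinarith) (by nlinarith)).comp r
      (((hasDerivAt_id' r).const_mul (12 / 5)).sub_const (1 / 5))
  have hprod := (((hasDerivAt_id' r).const_sub 1).const_mul 2).mul (hasDerivAt_arctan_sqrt hq)
  refine (harccos.sub hprod).congr_deriv ?_
  unfold psi'
  field_simp
  ring

lemma hasDerivAt_psi' {r : ℝ} (hr : r ∈ Ioo (1 / 3 : ℝ) (1 / 2)) :
    HasDerivAt psi' (psi'' r) r := by
  obtain ⟨hu, hp, h1r, hq⟩ := psi_domain_pos hr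
  have h₁ := ((hasDerivAt_sqrt_one_sub_sq hp).inv (sqrt_pos.2 hp).ne').const_mul (-(12 / 5))
  have h₂ := (hasDerivAt_arctan_sqrt hq).const_mul 2
  have h₃ := ((hasDerivAt_sqrt_four_mul_sq_sub_one hq).inv (sqrt_pos.2 hq).ne').const_mul 2
  refine ((h₁.add h₂).add h₃).congr_deriv ?_
  unfold psi''
  have hA := sqrt_pos.2 hp
  have hB := sqrt_pos.2 hq
  rw [sq_sqrt hp.le, sq_sqrt hq.le]
  generalize √(1 - (12 / 5 * r - 1 / 5) ^ 2) = A at hA ⊢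
  generalize √(4 * (1 - r) ^ 2 - 1) = B at hB ⊢
  generalize 1 - (12 / 5 * r - 1 / 5) ^ 2 = P at hp ⊢
  generalize hQ : 4 * (1 - r) ^ 2 - 1 = Q at hq ⊢
  field_simp
  rw [← hQ]
  ring

lemma psi''_nonpos {r : ℝ} (hr : r ∈ Ioo (1 / 3 : ℝ) (1 / 2)) : psi'' r ≤ 0 := by
  obtain ⟨hu, hp, h1r, hq⟩ := psi_domain_pos hr
  have hcube : 0 ≤ (1 - 2 * r) ^ 3 := pow_nonneg (by linarith [hr.2]) 3
  have hpoly := mul_le_mul_of_nonneg_left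
    (eight_mul_one_add_three_mul_cube_le (Ioo_subset_Icc_self hr)) hcube
  have key : 2 * ((1 - (12 / 5 * r - 1 / 5) ^ 2) * √(1 - (12 / 5 * r - 1 / 5) ^ 2)) ≤
      144 / 25 * (12 / 5 * r - 1 / 5) * (1 - r) *
        ((4 * (1 - r) ^ 2 - 1) * √(4 * (1 - r) ^ 2 - 1)) :=
    mul_mul_sqrt_le_mul_mul_sqrt (by positivity) hp.le hq.le
      (by linear_combination 6912 / 15625 * hpoly)
  have : 2 / ((1 - r) * ((4 * (1 - r) ^ 2 - 1) * √(4 * (1 - r) ^ 2 - 1))) ≤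
      144 / 25 * (12 / 5 * r - 1 / 5) /
        ((1 - (12 / 5 * r - 1 / 5) ^ 2) * √(1 - (12 / 5 * r - 1 / 5) ^ 2)) := by
    rw [div_le_div_iff₀ (by positivity) (by positivity)]
    linarith
  unfold psi''
  rw [neg_mul, neg_div]
  linarith

lemma continuous_psi : Continuous psi := by
  unfold psi
  fun_prop

lemma concaveOn_psi : ConcaveOn ℝ (Icc (1 / 3) (1 / 2)) psi := by
  refine concaveOn_of_hasDerivWithinAt2_nonpos (f' := psi') (f'' := psi'') (convex_Icc _ _)
    continuous_psi.continuousOn ?_ ?_ ?_ <;> rw [interior_Icc] <;> intro r hr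
  · exact (hasDerivAt_psi hr).hasDerivWithinAt
  · exact (hasDerivAt_psi' hr).hasDerivWithinAt
  · exact psi''_nonpos hr

lemma psi_one_half : psi (1 / 2) = 0 := by
  norm_num [psi]

lemma psi_one_sub_inv_sqrt_three_nonneg : 0 ≤ psi (1 - 1 / √3) := by
  set t : ℝ := 1 / √3 with ht
  have ht_sq : t ^ 2 = 1 / 3 := by
    rw [ht, div_pow, sq_sqrt (by norm_num : (0 : ℝ) ≤ 3)]; norm_num
  have ht_pos : 0 < t := by positivity
  have ht_gt : 0.577 < t := by nlinarith
  have harctan : arctan √(4 * t ^ 2 - 1) = π / 6 := by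
    rw [ht_sq, show (4 * (1 / 3) - 1 : ℝ) = 1 / 3 by norm_num, sqrt_div' _ (by norm_num),
      sqrt_one, ← tan_pi_div_six, arctan_tan (by linarith [pi_pos]) (by linarith [pi_pos])]
  have hθ_sq : (2 * t * (π / 6)) ^ 2 = π ^ 2 / 27 := by
    rw [mul_pow, mul_pow, ht_sq]; ring
  have hπ_sq : π ^ 2 < 3.15 ^ 2 := by gcongr; exact pi_lt_d2
  unfold psi
  rw [sub_sub_cancel, harctan, sub_nonneg]
  refine le_arccos_of_le_cos (by positivity) (by nlinarith [pi_pos]) ?_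
  calc 12 / 5 * (1 - t) - 1 / 5 ≤ 1 - (2 * t * (π / 6)) ^ 2 / 2 := by rw [hθ_sq]; linarith
    _ ≤ cos (2 * t * (π / 6)) := one_sub_sq_div_two_le_cos

theorem psi_concave_nonneg
    (ψ ℓ : ℝ → ℝ)
    (hψ : ∀ r, ψ r = Real.arccos ((12 / 5) * r - 1 / 5) -
        2 * (1 - r) * Real.arctan (Real.sqrt (4 * (1 - r) ^ 2 - 1)))
    (hℓ : ∀ r, ℓ r = 2 * Real.arctan (Real.sqrt (4 * (1 - r) ^ 2 - 1))) :
    ConcaveOn ℝ (Set.Icc (1 - 1 / Real.sqrt 3) (1 / 2)) ψ ∧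
    ∀ r ∈ Set.Icc (1 - 1 / Real.sqrt 3) (1 / 2),
      0 ≤ ψ r ∧ Real.cos ((1 - r) * ℓ r) ≥ (12 / 5) * r - 1 / 5 := by
  obtain rfl : ψ = psi := funext hψ
  have h_third : (1 / 3 : ℝ) ≤ 1 - 1 / √3 := by
    have : (3 / 2 : ℝ) ≤ √3 := le_sqrt_of_sq_le (by norm_num)
    have : 1 / √3 ≤ 2 / 3 := by rw [div_le_div_iff₀ (by positivity) (by norm_num)]; linarith
    linarith
  have hconc : ConcaveOn ℝ (Icc (1 - 1 / √3) (1 / 2)) psi :=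
    concaveOn_psi.subset (Icc_subset_Icc h_third le_rfl) (convex_Icc _ _)
  have hnonneg : ∀ r ∈ Icc (1 - 1 / √3) (1 / 2), 0 ≤ psi r := fun r hr =>
    have hle := hr.1.trans hr.2
    (le_min psi_one_sub_inv_sqrt_three_nonneg psi_one_half.ge).trans <|
      hconc.min_le_of_mem_Icc (left_mem_Icc.2 hle) (right_mem_Icc.2 hle) hr
  refine ⟨hconc, fun r hr => ⟨hnonneg r hr, ?_⟩⟩
  have h1r : 0 ≤ 1 - r := by linarith [hr.2]
  have hψr := hnonneg r hr
  unfold psi at hψr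
  rw [hℓ]
  exact le_cos_of_le_arccos (by positivity) (by linarith [hr.2]) (by linarith)
end

section
/- Let r ∈ [1 - 1/√3, 1/2), ℓ := 2 arctan(√(4(1-r)² - 1)), and define for h ∈ [0, ℓ]: a(h) := 2 arcsin((1-r) sin h), b(h) := h + (ℓ - a(h))/2, and F(h) := (1-r)² sin h cos h + (a(h) - sin a(h))/2 + (1-r)(cos(a(h)/2) - (1-r) cos h)·sin(h + ℓ) + b(h) - sin b(h). Then F''(h) < 0 for all h ∈ (0, ℓ]; in particular F is strictly concave on [0, ℓ]. -/
/-!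
Write `k = 1 - r`, `σ = sin h` and `s = cos (a h / 2) = √(1 - k² σ²)`. The only trace of `ℓ` in
`F'` is `2 k cos (ℓ / 2) = 1`, and two differentiations give
`F''(h) = 2 k σ / s³ * (P(k², σ²) - 4 k cos h · s³)` for an explicit polynomial `P`.
As `k ≤ 1/√3` forces `ℓ ≤ π/3`, on `(0, ℓ]` we have `σ > 0` and `cos h ≥ 1/2`, and the bracket is
negative because `P(x, u)² < 16 x (1 - u) (1 - x u)³ = (4 k cos h · s³)²` on
`[1/4, 1/3] × [0, 3/4]`.
-/

open Real Set

noncomputable def clusterAreaDeriv (k h : ℝ) : ℝ :=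
  1 + 2 * k ^ 2 * cos (2 * h) - 2 * k * cos h * √(1 - k ^ 2 * sin h ^ 2)
    + 2 * k ^ 3 * sin h ^ 2 * cos h / √(1 - k ^ 2 * sin h ^ 2)

noncomputable def clusterAreaDeriv2 (k h : ℝ) : ℝ :=
  -4 * k ^ 2 * sin (2 * h) + 2 * k ^ 5 * sin h ^ 3 * cos h ^ 2 / √(1 - k ^ 2 * sin h ^ 2) ^ 3
    + 2 * k * sin h * (1 - 2 * k ^ 2 * sin h ^ 2 + 3 * k ^ 2 * cos h ^ 2) / √(1 - k ^ 2 * sin h ^ 2)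

lemma one_sub_sq_mul_sin_sq_pos {k : ℝ} (hk : k ^ 2 < 1) (h : ℝ) :
    0 < 1 - k ^ 2 * sin h ^ 2 := by
  nlinarith [sin_sq_le_one h, sq_nonneg k]

lemma neg_one_lt_mul_sin_and_lt_one {k : ℝ} (hk : k ^ 2 < 1) (h : ℝ) :
    -1 < k * sin h ∧ k * sin h < 1 :=
  abs_lt_of_sq_lt_sq' (by nlinarith [one_sub_sq_mul_sin_sq_pos hk h]) zero_le_one

lemma hasDerivAt_arcsin_mul_sin {k : ℝ} (hk : k ^ 2 < 1) (h : ℝ) :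
    HasDerivAt (fun y => arcsin (k * sin y)) (k * cos h / √(1 - k ^ 2 * sin h ^ 2)) h := by
  obtain ⟨hlo, hhi⟩ := neg_one_lt_mul_sin_and_lt_one hk h
  have := (hasDerivAt_arcsin hlo.ne' hhi.ne).comp h ((hasDerivAt_sin h).const_mul k)
  rw [show 1 - (k * sin h) ^ 2 = 1 - k ^ 2 * sin h ^ 2 by ring] at this
  exact this.congr_deriv (by field_simp)

lemma hasDerivAt_clusterArea {k ℓ : ℝ} {a b F : ℝ → ℝ} (hk : k ^ 2 < 1)
    (hℓ : 2 * k * cos (ℓ / 2) = 1)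
    (ha : ∀ h, a h = 2 * arcsin (k * sin h)) (hb : ∀ h, b h = h + (ℓ - a h) / 2)
    (hF : ∀ h, F h = k ^ 2 * sin h * cos h + (a h - sin (a h)) / 2 +
        k * (cos (a h / 2) - k * cos h) * sin (h + ℓ) + b h - sin (b h)) (h : ℝ) :
    HasDerivAt F (clusterAreaDeriv k h) h := by
  have hFeq : F = fun y => k ^ 2 * sin y * cos y
      + (2 * arcsin (k * sin y) - sin (2 * arcsin (k * sin y))) / 2
      + k * (cos (arcsin (k * sin y)) - k * cos y) * sin (y + ℓ)
      + (y + ℓ / 2 - arcsin (k * sin y)) - sin (y + ℓ / 2 - arcsin (k * sin y)) := by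
    funext y
    rw [hF, hb, ha]
    ring_nf
  have hpos := one_sub_sq_mul_sin_sq_pos hk h
  have hs2 : √(1 - k ^ 2 * sin h ^ 2) ^ 2 = 1 - k ^ 2 * sin h ^ 2 := sq_sqrt hpos.le
  obtain ⟨hlo, hhi⟩ := neg_one_lt_mul_sin_and_lt_one hk h
  have hsqrt : √(1 - (k * sin h) ^ 2) = √(1 - k ^ 2 * sin h ^ 2) := by ring_nf
  have dsin := hasDerivAt_sin h
  have dcos := hasDerivAt_cos h
  have darc := hasDerivAt_arcsin_mul_sin hk h
  have dα2 := darc.const_mul 2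
  have dsinℓ : HasDerivAt (fun y => sin (y + ℓ)) (cos (h + ℓ)) h := by
    simpa using ((hasDerivAt_id h).add_const ℓ).sin
  have dβ := ((hasDerivAt_id h).add_const (ℓ / 2)).sub darc
  have := (((((dsin.const_mul (k ^ 2)).mul dcos).add ((dα2.sub dα2.sin).div_const 2)).add
    (((darc.cos.sub (dcos.const_mul k)).const_mul k).mul dsinℓ)).add dβ).sub dβ.sin
  rw [hFeq]
  refine this.congr_deriv ?_
  simp only [clusterAreaDeriv, id, Pi.sub_apply]
  have hk₀ : k ≠ 0 := by rintro rfl; simp at hℓ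
  have hC : cos (ℓ / 2) = 1 / (2 * k) := by
    rw [eq_div_iff (by positivity)]; linarith
  rw [show h + ℓ = h + 2 * (ℓ / 2) by ring]
  simp only [cos_two_mul, sin_two_mul, cos_sub, sin_add, cos_add, sin_arcsin hlo.le hhi.le,
    cos_arcsin, hsqrt, hC]
  -- the terms in `sin (ℓ / 2)` cancel
  field_simp
  linear_combination (-4 * k ^ 3 * √(1 - k ^ 2 * sin h ^ 2)) * sin_sq_add_cos_sq h
    - 2 * k ^ 2 * cos h * hs2

lemma hasDerivAt_clusterAreaDeriv {k : ℝ} (hk : k ^ 2 < 1) (h : ℝ) :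
    HasDerivAt (clusterAreaDeriv k) (clusterAreaDeriv2 k h) h := by
  have hpos := one_sub_sq_mul_sin_sq_pos hk h
  have hs : 0 < √(1 - k ^ 2 * sin h ^ 2) := sqrt_pos.2 hpos
  have hs2 : √(1 - k ^ 2 * sin h ^ 2) ^ 2 = 1 - k ^ 2 * sin h ^ 2 := sq_sqrt hpos.le
  have dsin := hasDerivAt_sin h
  have dcos := hasDerivAt_cos h
  have dcos2 : HasDerivAt (fun y => cos (2 * y)) (-sin (2 * h) * 2) h := by
    simpa using ((hasDerivAt_id h).const_mul 2).cos
  have dsqrt := ((((dsin.pow 2).const_mul (k ^ 2)).const_sub 1).sqrt hpos.ne')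
  have := ((((hasDerivAt_const h (1 : ℝ)).add (dcos2.const_mul (2 * k ^ 2))).sub
    ((dcos.const_mul (2 * k)).mul dsqrt)).add
    ((((dsin.pow 2).const_mul (2 * k ^ 3)).mul dcos).div dsqrt hs.ne'))
  refine this.congr_deriv ?_
  simp only [clusterAreaDeriv2, sin_two_mul, Pi.pow_apply, Pi.mul_apply]
  field_simp
  push_cast
  linear_combination (2 * k * sin h * √(1 - k ^ 2 * sin h ^ 2) ^ 2) * hs2

def concavityPoly (x u : ℝ) : ℝ :=
  x ^ 2 * u * (1 - u) + (1 + 3 * x - 5 * x * u) * (1 - x * u)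

lemma concavityPoly_sq_lt {x u : ℝ} (hx₁ : 1 / 4 ≤ x) (hx₂ : x ≤ 1 / 3) (hu₁ : 0 ≤ u)
    (hu₂ : u ≤ 3 / 4) : concavityPoly x u ^ 2 < 16 * x * (1 - u) * (1 - x * u) ^ 3 := by
  obtain ⟨a, ha, rfl⟩ : ∃ a, 0 ≤ a ∧ x = 1 / 4 + a := ⟨x - 1 / 4, by linarith, by ring⟩
  obtain ⟨v, hv, rfl⟩ : ∃ v, 0 ≤ v ∧ u = 3 / 4 - v := ⟨3 / 4 - u, by linarith, by ring⟩
  have ha' : 0 ≤ 1 / 12 - a := by linarith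
  have hv' : 0 ≤ 3 / 4 - v := by linarith
  unfold concavityPoly
  nlinarith [mul_nonneg (mul_nonneg ha ha) ha', mul_nonneg (mul_nonneg ha ha) hv,
    mul_nonneg (mul_nonneg (mul_nonneg ha ha) ha) hv, mul_nonneg (mul_nonneg ha hv) hv',
    mul_nonneg (mul_nonneg ha ha) hv', sq_nonneg (a * v), sq_nonneg (a * a),
    mul_nonneg (mul_nonneg (mul_nonneg ha ha) hv) hv, mul_nonneg ha hv]

lemma clusterAreaDeriv2_eq {k : ℝ} (hk : k ^ 2 < 1) (hk₀ : k ≠ 0) (h : ℝ) :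
    clusterAreaDeriv2 k h = 2 * k * sin h / √(1 - k ^ 2 * sin h ^ 2) ^ 3 *
      (concavityPoly (k ^ 2) (sin h ^ 2) - 4 * k * cos h * √(1 - k ^ 2 * sin h ^ 2) ^ 3) := by
  have hpos := one_sub_sq_mul_sin_sq_pos hk h
  have hs : √(1 - k ^ 2 * sin h ^ 2) ≠ 0 := (sqrt_pos.2 hpos).ne'
  have hs2 : √(1 - k ^ 2 * sin h ^ 2) ^ 2 = 1 - k ^ 2 * sin h ^ 2 := sq_sqrt hpos.le
  rw [clusterAreaDeriv2, concavityPoly, sin_two_mul]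
  field_simp
  linear_combination sin h * (k ^ 4 * sin h ^ 2 + 3 * k ^ 2 * (1 - k ^ 2 * sin h ^ 2)) *
      sin_sq_add_cos_sq h + sin h * (1 - 2 * k ^ 2 * sin h ^ 2 + 3 * k ^ 2 * cos h ^ 2) * hs2

lemma clusterAreaDeriv2_neg {k h : ℝ} (hk₀ : 0 < k) (hk₁ : 1 / 4 ≤ k ^ 2) (hk₂ : k ^ 2 ≤ 1 / 3)
    (hh : h ∈ Ioc 0 (π / 3)) : clusterAreaDeriv2 k h < 0 := by
  obtain ⟨hh₀, hh₁⟩ := hh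
  have hsin : 0 < sin h := sin_pos_of_pos_of_lt_pi hh₀ (by linarith [pi_pos])
  have hcos : 1 / 2 ≤ cos h := by
    rw [← cos_pi_div_three]
    exact cos_le_cos_of_nonneg_of_le_pi hh₀.le (by linarith [pi_pos]) hh₁
  have hpos := one_sub_sq_mul_sin_sq_pos (k := k) (by linarith) h
  have hs : 0 < √(1 - k ^ 2 * sin h ^ 2) := sqrt_pos.2 hpos
  have hs2 : √(1 - k ^ 2 * sin h ^ 2) ^ 2 = 1 - k ^ 2 * sin h ^ 2 := sq_sqrt hpos.le
  have hbound :
      concavityPoly (k ^ 2) (sin h ^ 2) < 4 * k * cos h * √(1 - k ^ 2 * sin h ^ 2) ^ 3 := by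
    refine lt_of_pow_lt_pow_left₀ 2 (by positivity) ?_
    calc concavityPoly (k ^ 2) (sin h ^ 2) ^ 2
        < 16 * k ^ 2 * (1 - sin h ^ 2) * (1 - k ^ 2 * sin h ^ 2) ^ 3 :=
          concavityPoly_sq_lt hk₁ hk₂ (sq_nonneg _) (by nlinarith [sin_sq_add_cos_sq h])
      _ = (4 * k * cos h) ^ 2 * (√(1 - k ^ 2 * sin h ^ 2) ^ 2) ^ 3 := by
          rw [hs2, mul_pow, cos_sq']; ring
      _ = (4 * k * cos h * √(1 - k ^ 2 * sin h ^ 2) ^ 3) ^ 2 := by ring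
  rw [clusterAreaDeriv2_eq (by linarith) hk₀.ne']
  exact mul_neg_of_pos_of_neg (by positivity) (by linarith)

lemma two_mul_mul_cos_arctan_sqrt {k : ℝ} (hk₀ : 0 < k) (hk₁ : 1 / 4 ≤ k ^ 2) :
    2 * k * cos (arctan √(4 * k ^ 2 - 1)) = 1 := by
  rw [cos_arctan, sq_sqrt (by linarith), show 1 + (4 * k ^ 2 - 1) = (2 * k) ^ 2 by ring,
    sqrt_sq (by positivity)]
  field_simp

lemma arctan_sqrt_le_pi_div_six {k : ℝ} (hk : k ^ 2 ≤ 1 / 3) :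
    arctan √(4 * k ^ 2 - 1) ≤ π / 6 := by
  rw [← arctan_inv_sqrt_three, ← sqrt_inv]
  exact arctan_strictMono.monotone (sqrt_le_sqrt (by linarith))

theorem F_second_deriv_neg
    (r ℓ : ℝ) (hr : r ∈ Set.Ico (1 - 1 / Real.sqrt 3) (1 / 2))
    (hℓ : ℓ = 2 * Real.arctan (Real.sqrt (4 * (1 - r) ^ 2 - 1)))
    (a b F : ℝ → ℝ)
    (ha : ∀ h, a h = 2 * Real.arcsin ((1 - r) * Real.sin h))
    (hb : ∀ h, b h = h + (ℓ - a h) / 2)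
    (hF : ∀ h, F h = (1 - r) ^ 2 * Real.sin h * Real.cos h +
        (a h - Real.sin (a h)) / 2 +
        (1 - r) * (Real.cos (a h / 2) - (1 - r) * Real.cos h) * Real.sin (h + ℓ) +
        b h - Real.sin (b h)) :
    (∀ h ∈ Set.Ioc 0 ℓ, deriv (deriv F) h < 0) ∧
    StrictConcaveOn ℝ (Set.Icc 0 ℓ) F := by
  obtain ⟨hr₁, hr₂⟩ := hr
  set k := 1 - r
  have hk₀ : 0 < k := by linarith
  have hk₁ : 1 / 4 ≤ k ^ 2 := by nlinarith
  have hk₂ : k ^ 2 ≤ 1 / 3 := by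
    have := pow_le_pow_left₀ hk₀.le (show k ≤ 1 / √3 by linarith) 2
    rwa [div_pow, one_pow, sq_sqrt (by norm_num)] at this
  have hℓcos : 2 * k * cos (ℓ / 2) = 1 := by
    rw [hℓ, mul_div_cancel_left₀ _ two_ne_zero]
    exact two_mul_mul_cos_arctan_sqrt hk₀ hk₁
  have hℓπ : ℓ ≤ π / 3 := by linarith [arctan_sqrt_le_pi_div_six hk₂]
  have hF' (h : ℝ) : HasDerivAt F (clusterAreaDeriv k h) h :=
    hasDerivAt_clusterArea (by linarith) hℓcos ha hb hF h
  have hF'' : deriv (deriv F) = clusterAreaDeriv2 k := by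
    funext h
    rw [funext fun y => (hF' y).deriv]
    exact (hasDerivAt_clusterAreaDeriv (by linarith) h).deriv
  have hneg : ∀ h ∈ Ioc 0 ℓ, deriv (deriv F) h < 0 := fun h hh =>
    hF'' ▸ clusterAreaDeriv2_neg hk₀ hk₁ hk₂ ⟨hh.1, hh.2.trans hℓπ⟩
  refine ⟨hneg, strictConcaveOn_of_deriv2_neg (convex_Icc 0 ℓ)
    (fun x _ => (hF' x).continuousAt.continuousWithinAt) ?_⟩
  rw [interior_Icc]
  exact fun x hx => hneg x (Ioo_subset_Ioc_self hx)
end
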